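/- Let N be a nilpotent real n×n matrix and let k be an orthogonal n×n matrix. For each t ∈ ℝ let Q(t) be the unique orthogonal n×n matrix for which there exists an upper triangular matrix B(t) with positive diagonal entries satisfying exp(t N)·k = Q(t)·B(t) (the orthogonal factor of the QR decomposition of exp(tN)·k, given by Gram–Schmidt applied to its columns). Then Q(t) converges entrywise to some orthogonal matrix as t → +∞. -/

import Mathlib

/-!
Since `N` is nilpotent, the entries of `A(t) = exp(tN)·k` are polynomials in `t`. By Cramer's rule,
the `c`-th Gram–Schmidt vector of the columns of `A(t)`, multiplied by the (positive) Gram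
determinant of the columns before it, is `g(t) = A(t) w(t)` with `w(t)` polynomial in the entries
of `A(t)`. Hence the `c`-th column of `Q(t)` is `g(t) / ‖g(t)‖` for a nonzero polynomial vector `g`,
and this tends to the normalised vector of the top-degree coefficients of `g`. Orthogonality of
`Q(t)` passes to the limit.
-/

open Filter Topology NormedSpace Matrix

theorem tendsto_inv_norm_smul_of_tendsto_smul {α E : Type*} [NormedAddCommGroup E]
    [NormedSpace ℝ E] {l : Filter α} {f : α → E} {r : α → ℝ} {v : E}
    (hr : ∀ᶠ a in l, 0 < r a) (hf : Tendsto (fun a => r a • f a) l (𝓝 v)) (hv : v ≠ 0) :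
    Tendsto (fun a => ‖f a‖⁻¹ • f a) l (𝓝 (‖v‖⁻¹ • v)) := by
  refine ((hf.norm.inv₀ (norm_ne_zero_iff.2 hv)).smul hf).congr' ?_
  filter_upwards [hr] with a ha
  rw [norm_smul, Real.norm_of_nonneg ha.le, smul_smul]
  field_simp

namespace Polynomial

theorem tendsto_eval_div_pow_atTop (q : Polynomial ℝ) {d : ℕ} (h : q.natDegree ≤ d) :
    Tendsto (fun t => q.eval t / t ^ d) atTop (𝓝 (q.coeff d)) := by
  by_cases hq : q = 0
  · simp [hq]
  rcases h.lt_or_eq with hlt | rfl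
  · rw [coeff_eq_zero_of_natDegree_lt hlt]
    simpa using div_tendsto_atTop_zero_of_degree_lt q (X ^ d)
      (degree_lt_degree (by rwa [natDegree_X_pow]))
  · simpa using div_tendsto_atTop_leadingCoeff_div_of_degree_eq q (X ^ q.natDegree)
      (by rw [degree_X_pow, degree_eq_natDegree hq])

theorem exists_tendsto_inv_norm_smul_eval {ι : Type*} [Fintype ι] (p : ι → Polynomial ℝ)
    (hp : p ≠ 0) :
    ∃ v : EuclideanSpace ℝ ι, Tendsto
      (fun t => ‖WithLp.toLp 2 (fun i => (p i).eval t)‖⁻¹ • WithLp.toLp 2 (fun i => (p i).eval t))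
      atTop (𝓝 v) := by
  classical
  obtain ⟨i₀, hi₀, hmax⟩ := Finset.exists_max_image {i | p i ≠ 0} (fun i => (p i).natDegree)
    (by simpa [Finset.Nonempty, Function.ne_iff] using hp)
  set d := (p i₀).natDegree
  have hdeg : ∀ i, (p i).natDegree ≤ d := fun i => by
    by_cases hi : p i = 0
    · simp [hi]
    · exact hmax i (by simpa using hi)
  set v : EuclideanSpace ℝ ι := WithLp.toLp 2 fun i => (p i).coeff d
  have hv : v ≠ 0 := fun h => by
    have := congrArg (fun w : EuclideanSpace ℝ ι => w i₀) h
    simp_all [v, d]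
  have hlim : Tendsto (fun t : ℝ => fun i => (p i).eval t / t ^ d) atTop
      (𝓝 fun i => (p i).coeff d) :=
    tendsto_pi_nhds.2 fun i => (p i).tendsto_eval_div_pow_atTop (hdeg i)
  refine ⟨_, tendsto_inv_norm_smul_of_tendsto_smul (r := fun t => (t ^ d)⁻¹)
    ((eventually_gt_atTop 0).mono fun t ht => by positivity) ?_ hv⟩
  refine (((PiLp.continuous_toLp 2 _).tendsto _).comp hlim).congr fun t => ?_
  ext i
  simp [div_eq_inv_mul]

end Polynomial

theorem NormedSpace.exp_eq_sum_range_of_pow_eq_zero (𝕂 : Type*) {𝔸 : Type*} [Field 𝕂]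
    [CharZero 𝕂] [Ring 𝔸] [Algebra 𝕂 𝔸] [TopologicalSpace 𝔸] [IsTopologicalRing 𝔸] {x : 𝔸}
    {m : ℕ} (h : x ^ m = 0) : exp x = ∑ i ∈ Finset.range m, (i.factorial : 𝕂)⁻¹ • x ^ i := by
  rw [exp_eq_tsum 𝕂]
  exact tsum_eq_sum fun i hi => by
    rw [pow_eq_zero_of_le (by simpa using hi) h, smul_zero]

namespace Matrix

theorem exists_map_eval_eq_exp_smul_mul {ι : Type*} [Fintype ι] [DecidableEq ι]
    {N : Matrix ι ι ℝ} (hN : IsNilpotent N) (k : Matrix ι ι ℝ) :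
    ∃ P : Matrix ι ι (Polynomial ℝ), ∀ t : ℝ, P.map (Polynomial.eval t) = exp (t • N) * k := by
  obtain ⟨m, hm⟩ := hN
  refine ⟨∑ i ∈ Finset.range m,
    Polynomial.monomial i ((i.factorial : ℝ)⁻¹) • (N ^ i * k).map Polynomial.C, fun t => ?_⟩
  have htm : (t • N) ^ m = 0 := by rw [smul_pow, hm, smul_zero]
  rw [exp_eq_sum_range_of_pow_eq_zero ℝ htm, Finset.sum_mul]
  ext x y
  simp [sum_apply, mul_apply, Polynomial.eval_finsetSum, smul_pow, Polynomial.eval_monomial]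
  exact Finset.sum_congr rfl fun i _ => by ring

theorem norm_toLp_col_eq_one {ι : Type*} [Fintype ι] [DecidableEq ι] {Q : Matrix ι ι ℝ}
    (hQ : Qᵀ * Q = 1) (c : ι) : ‖WithLp.toLp 2 (Q.col c)‖ = 1 := by
  have h := congrFun (congrFun hQ c) c
  rw [← pow_left_inj₀ (norm_nonneg _) zero_le_one two_ne_zero, one_pow,
    EuclideanSpace.real_norm_sq_eq]
  simpa [mul_apply, sq] using h

theorem mul_transpose_eq_one_of_tendsto {α ι R : Type*} [Fintype ι] [DecidableEq ι]
    [CommRing R] [TopologicalSpace R] [IsTopologicalRing R] [T2Space R] {l : Filter α} [l.NeBot]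
    {Q : α → Matrix ι ι R} {L : Matrix ι ι R} (hlim : Tendsto Q l (𝓝 L))
    (hQ : ∀ a, Q a * (Q a)ᵀ = 1) : L * Lᵀ = 1 :=
  tendsto_nhds_unique (hlim.mul ((continuous_id.matrix_transpose.tendsto L).comp hlim))
    (by simp [hQ])

variable {ι : Type*} [Fintype ι] [LinearOrder ι]

section GramSchmidt

variable {R S : Type*} [CommRing R] [CommRing S]

def leadingSubmatrix (M : Matrix ι ι R) (c : ι) : Matrix {j // j < c} {j // j < c} R :=
  M.submatrix Subtype.val Subtype.val

/-- For `M = Aᵀ * A`, the vector `A *ᵥ M.gramSchmidtCoeffs c` is the `c`-th Gram–Schmidt vector of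
the columns of `A`, scaled by the Gram determinant of the columns before `c`: the coefficients of
the earlier columns are those of the orthogonal projection, solved for by Cramer's rule. -/
def gramSchmidtCoeffs (M : Matrix ι ι R) (c : ι) (j : ι) : R :=
  if j = c then (M.leadingSubmatrix c).det
  else if h : j < c then -((M.leadingSubmatrix c).adjugate *ᵥ fun i => M i c) ⟨j, h⟩ else 0

theorem gramSchmidtCoeffs_self (M : Matrix ι ι R) (c : ι) :
    M.gramSchmidtCoeffs c c = (M.leadingSubmatrix c).det := by
  simp [gramSchmidtCoeffs]

theorem gramSchmidtCoeffs_of_lt (M : Matrix ι ι R) {c j : ι} (h : c < j) :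
    M.gramSchmidtCoeffs c j = 0 := by
  simp [gramSchmidtCoeffs, h.ne', h.not_gt]

theorem mulVec_gramSchmidtCoeffs_of_lt (M : Matrix ι ι R) {c i : ι} (hi : i < c) :
    (M *ᵥ M.gramSchmidtCoeffs c) i = 0 := by
  set G := M.leadingSubmatrix c
  set b : {j // j < c} → R := fun l => M l c
  have hcramer : G *ᵥ (G.adjugate *ᵥ b) = G.det • b := by
    rw [mulVec_mulVec, mul_adjugate, smul_mulVec, one_mulVec]
  have hlow : ∑ j : {j // j < c}, M i j * M.gramSchmidtCoeffs c j = -(G.det * M i c) := by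
    have hw : ∀ l : {j // j < c}, M.gramSchmidtCoeffs c l = -(G.adjugate *ᵥ b) l := fun l => by
      simp [gramSchmidtCoeffs, l.2.ne, l.2, G, b]
    simp only [hw, mul_neg, Finset.sum_neg_distrib]
    simpa [mulVec, dotProduct, G, b, leadingSubmatrix] using congrFun hcramer ⟨i, hi⟩
  have hhigh : ∑ j : {j // ¬ j < c}, M i j * M.gramSchmidtCoeffs c j = G.det * M i c := by
    rw [Fintype.sum_eq_single ⟨c, lt_irrefl c⟩]
    · simp [gramSchmidtCoeffs_self, G, mul_comm]
    · rintro ⟨j, hj⟩ hjc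
      have hcj : c < j := lt_of_le_of_ne (not_lt.1 hj) fun h => hjc (Subtype.ext h.symm)
      rw [gramSchmidtCoeffs_of_lt M hcj, mul_zero]
  rw [mulVec, dotProduct, ← Fintype.sum_subtype_add_sum_subtype (· < c), hlow, hhigh,
    neg_add_cancel]

theorem gramSchmidtCoeffs_map (M : Matrix ι ι R) (f : R →+* S) (c : ι) :
    (M.map f).gramSchmidtCoeffs c = f ∘ M.gramSchmidtCoeffs c := by
  ext j
  have hG : (M.map f).leadingSubmatrix c = f.mapMatrix (M.leadingSubmatrix c) := rfl
  simp only [gramSchmidtCoeffs, hG, ← f.map_det, ← f.map_adjugate, Function.comp_apply]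
  split_ifs <;> simp [RingHom.map_mulVec, Function.comp_def]

theorem gramSchmidtCoeffs_self_pos {M : Matrix ι ι ℝ} (hM : M.PosDef) (c : ι) :
    0 < M.gramSchmidtCoeffs c c := by
  rw [gramSchmidtCoeffs_self]
  exact (hM.submatrix Subtype.val_injective).det_pos

end GramSchmidt

section Triangular

variable {K : Type*} [Field K] {B : Matrix ι ι K}

theorem BlockTriangular.mulVec_apply_of_le (hB : B.BlockTriangular id) {w : ι → K} {c j : ι}
    (hw : ∀ k, c < k → w k = 0) (hj : c ≤ j) : (B *ᵥ w) j = B j c * w c := by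
  refine Finset.sum_eq_single c (fun k _ hkc => ?_) (by simp)
  rcases hkc.lt_or_gt with hk | hk
  · simp [hB (hk.trans_le hj)]
  · rw [hw k hk, mul_zero]

theorem BlockTriangular.eq_zero_of_vecMul_apply_eq_zero (hB : B.BlockTriangular id)
    (hdiag : ∀ i, B i i ≠ 0) {β : ι → K} {c : ι} (h : ∀ i < c, (β ᵥ* B) i = 0) :
    ∀ i < c, β i = 0 := by
  intro i
  induction i using WellFoundedLT.induction with
  | ind i ih =>
    intro hi
    have hsum : (β ᵥ* B) i = β i * B i i := by
      refine Finset.sum_eq_single i (fun j _ hji => ?_) (by simp)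
      rcases hji.lt_or_gt with hj | hj
      · rw [ih j hj (hj.trans hi), zero_mul]
      · simp [hB hj]
    simpa [hdiag i] using hsum.symm.trans (h i hi)

theorem mul_mulVec_eq_smul_col {Q : Matrix ι ι K} (hQ : Qᵀ * Q = 1)
    (hB : B.BlockTriangular id) (hdiag : ∀ i, B i i ≠ 0) {w : ι → K} {c : ι}
    (hw : ∀ k, c < k → w k = 0) (horth : ∀ i < c, (((Q * B)ᵀ * (Q * B)) *ᵥ w) i = 0) :
    (Q * B) *ᵥ w = (B c c * w c) • Q.col c := by
  have hβ : B *ᵥ w = Pi.single c (B c c * w c) := by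
    have hlow : ∀ i < c, (B *ᵥ w) i = 0 := by
      refine hB.eq_zero_of_vecMul_apply_eq_zero hdiag fun i hi => ?_
      rw [← mulVec_transpose, mulVec_mulVec]
      simpa [transpose_mul, Matrix.mul_assoc, ← Matrix.mul_assoc Qᵀ, hQ, mulVec_mulVec]
        using horth i hi
    ext j
    rcases lt_trichotomy j c with hj | rfl | hj
    · simp [hlow j hj, hj.ne]
    · simp [hB.mulVec_apply_of_le hw le_rfl]
    · simp [hB.mulVec_apply_of_le hw hj.le, hB hj, hj.ne']
  rw [← mulVec_mulVec, hβ, mulVec_single]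
  ext
  simp [mul_comm]

end Triangular

theorem toLp_col_eq_inv_norm_smul {Q B : Matrix ι ι ℝ} (hQ : Qᵀ * Q = 1)
    (hB : B.BlockTriangular id) (hdiag : ∀ i, 0 < B i i) (c : ι) :
    WithLp.toLp 2 (Q.col c) =
      ‖WithLp.toLp 2 ((Q * B) *ᵥ ((Q * B)ᵀ * (Q * B)).gramSchmidtCoeffs c)‖⁻¹ •
        WithLp.toLp 2 ((Q * B) *ᵥ ((Q * B)ᵀ * (Q * B)).gramSchmidtCoeffs c) := by
  set A := Q * B
  have hA : IsUnit A := by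
    rw [isUnit_iff_isUnit_det, det_mul, det_of_isUpperTriangular hB]
    exact (isUnit_det_of_left_inverse hQ).mul (Finset.prod_pos fun i _ => hdiag i).ne'.isUnit
  have hgram : (Aᵀ * A).PosDef := by
    simpa [conjTranspose_eq_transpose_of_trivial] using
      PosDef.conjTranspose_mul_self A (mulVec_injective_iff_isUnit.2 hA)
  have hcol := mul_mulVec_eq_smul_col (c := c) hQ hB (fun i => (hdiag i).ne')
    (fun k hk => gramSchmidtCoeffs_of_lt _ hk) (fun i hi => mulVec_gramSchmidtCoeffs_of_lt _ hi)
  have hs : 0 < B c c * (Aᵀ * A).gramSchmidtCoeffs c c :=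
    mul_pos (hdiag c) (gramSchmidtCoeffs_self_pos hgram c)
  rw [hcol, WithLp.toLp_smul, norm_smul, norm_toLp_col_eq_one hQ, mul_one,
    Real.norm_of_nonneg hs.le, smul_smul, inv_mul_cancel₀ hs.ne', one_smul]

theorem exists_tendsto_qr_orthogonal_factor {P : Matrix ι ι (Polynomial ℝ)}
    {Q : ℝ → Matrix ι ι ℝ} (hQ : ∀ t, (Q t)ᵀ * Q t = 1)
    (hQR : ∀ t, ∃ B : Matrix ι ι ℝ, B.BlockTriangular id ∧ (∀ i, 0 < B i i) ∧
      P.map (Polynomial.eval t) = Q t * B) :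
    ∃ L, Tendsto Q atTop (𝓝 L) := by
  have hcol : ∀ c, ∃ v : EuclideanSpace ℝ ι,
      Tendsto (fun t => WithLp.toLp 2 ((Q t).col c)) atTop (𝓝 v) := by
    intro c
    set p := P *ᵥ (Pᵀ * P).gramSchmidtCoeffs c
    have hQcol : ∀ t, WithLp.toLp 2 ((Q t).col c) =
        ‖WithLp.toLp 2 (fun i => (p i).eval t)‖⁻¹ • WithLp.toLp 2 (fun i => (p i).eval t) := by
      intro t
      obtain ⟨B, hB, hBpos, hPQB⟩ := hQR t
      have hpt : (fun i => (p i).eval t) =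
          (Q t * B) *ᵥ ((Q t * B)ᵀ * (Q t * B)).gramSchmidtCoeffs c := by
        ext i
        rw [← Polynomial.coe_evalRingHom, RingHom.map_mulVec, ← gramSchmidtCoeffs_map,
          Matrix.map_mul, transpose_map, Polynomial.coe_evalRingHom, hPQB]
      rw [hpt]
      exact toLp_col_eq_inv_norm_smul (hQ t) hB hBpos c
    have hp : p ≠ 0 := fun hp0 => by
      have h := norm_toLp_col_eq_one (hQ 0) c
      simp [hQcol 0, hp0, ← Pi.zero_def] at h
    obtain ⟨v, hv⟩ := Polynomial.exists_tendsto_inv_norm_smul_eval p hp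
    exact ⟨v, hv.congr fun t => (hQcol t).symm⟩
  choose v hv using hcol
  exact ⟨of fun i j => v j i, tendsto_pi_nhds.2 fun i => tendsto_pi_nhds.2 fun j =>
    ((PiLp.continuous_apply 2 _ i).tendsto _).comp (hv j)⟩

end Matrix

theorem qr_factor_of_unipotent_flow_converges_general
    {n : ℕ} (N k : Matrix (Fin n) (Fin n) ℝ)
    (hN : ∃ m : ℕ, N ^ m = 0)
    (Q : ℝ → Matrix (Fin n) (Fin n) ℝ)
    (hQ : ∀ t : ℝ, Q t * (Q t).transpose = 1 ∧
      ∃ B : Matrix (Fin n) (Fin n) ℝ,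
        (∀ i j : Fin n, j < i → B i j = 0) ∧ (∀ i, 0 < B i i) ∧
        exp (t • N) * k = Q t * B) :
    ∃ L : Matrix (Fin n) (Fin n) ℝ, L * L.transpose = 1 ∧
      ∀ i j : Fin n, Tendsto (fun t => Q t i j) atTop (𝓝 (L i j)) := by
  obtain ⟨P, hP⟩ := exists_map_eval_eq_exp_smul_mul hN k
  have hQR : ∀ t, ∃ B : Matrix (Fin n) (Fin n) ℝ, B.BlockTriangular id ∧ (∀ i, 0 < B i i) ∧
      P.map (Polynomial.eval t) = Q t * B := fun t => by
    obtain ⟨-, B, hB, hBpos, hAQB⟩ := hQ t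
    exact ⟨B, fun i j h => hB i j h, hBpos, (hP t).trans hAQB⟩
  obtain ⟨L, hL⟩ := exists_tendsto_qr_orthogonal_factor (fun t => mul_eq_one_comm.1 (hQ t).1) hQR
  exact ⟨L, mul_transpose_eq_one_of_tendsto hL fun t => (hQ t).1,
    fun i j => tendsto_pi_nhds.1 (tendsto_pi_nhds.1 hL i) j⟩

/-- The orthogonal (Gram–Schmidt) factor of `exp(tN)·k`, for `N` nilpotent and `k`
orthogonal, converges to an orthogonal matrix as `t → +∞`. -/
theorem qr_factor_of_unipotent_flow_converges
    {n : ℕ} (N k : Matrix (Fin n) (Fin n) ℝ)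
    (hN : ∃ m : ℕ, N ^ m = 0)
    (hk : k * k.transpose = 1)
    (Q : ℝ → Matrix (Fin n) (Fin n) ℝ)
    (hQ : ∀ t : ℝ, Q t * (Q t).transpose = 1 ∧
      ∃ B : Matrix (Fin n) (Fin n) ℝ,
        (∀ i j : Fin n, j < i → B i j = 0) ∧ (∀ i, 0 < B i i) ∧
        exp (t • N) * k = Q t * B) :
    ∃ L : Matrix (Fin n) (Fin n) ℝ, L * L.transpose = 1 ∧
      ∀ i j : Fin n, Tendsto (fun t => Q t i j) atTop (𝓝 (L i j)) :=
  qr_factor_of_unipotent_flow_converges_general N k hN Q hQ
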